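/- arXiv:1512.01018 — 3 statements merged into one kernel-verified Lean document; each statement's English description precedes it below -/
import Mathlib

section
/- Let L be a finite-dimensional Lie algebra over a field F with radical R = R(L). Then distinct quasi-minimal components of L commute: E†(L) is the sum of the quasi-minimal components of L, and for any two distinct quasi-minimal components P, Q one has [P,Q] = 0 and P ∩ Q ⊆ Z(R). -/
namespace Paper

open LieAlgebra

section AlgDefs

variable (F : Type*) [Field F] (L : Type*) [LieRing L] [LieAlgebra F L]

/-- The nilradical of a Lie algebra: the largest nilpotent ideal (the sup of nilpotent ideals). -/
noncomputable def nilrad : LieIdeal F L :=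
  sSup {I : LieIdeal F L | LieModule.IsNilpotent I I}

/-- The nilpotency class of a Lie algebra. -/
noncomputable def nilClass : ℕ := sInf {k | LieModule.lowerCentralSeries F L L k = ⊥}

/-- A Lie algebra is nilregular if the field has characteristic zero, or characteristic `p > 0`
and its nilradical has nilpotency class less than `p - 1`. -/
noncomputable def Nilregular : Prop :=
  ringChar F = 0 ∨ nilClass F (nilrad F L) < ringChar F - 1

/-- A Lie algebra is solregular if the field has characteristic zero, or characteristic `p > 0`
and its radical has derived length less than `log₂ p`. -/
noncomputable def Solregular : Prop :=
  ringChar F = 0 ∨ 2 ^ LieAlgebra.derivedLength F (LieAlgebra.radical F L) < ringChar F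

/-- Regular means nilregular or solregular. -/
noncomputable def Regular : Prop := Nilregular F L ∨ Solregular F L

end AlgDefs

section IdealDefs

variable {F : Type*} [Field F] {L : Type*} [LieRing L] [LieAlgebra F L]

/-- The centraliser `C_L(I)` of an ideal `I`, as an ideal of `L`. -/
def centralizer (I : LieIdeal F L) : LieIdeal F L where
  carrier := {x : L | ∀ y ∈ I, ⁅x, y⁆ = 0}
  zero_mem' := by intro y hy; simp
  add_mem' := by intro a b ha hb y hy; rw [add_lie, ha y hy, hb y hy, add_zero]
  smul_mem' := by intro c x hx y hy; rw [smul_lie, hx y hy, smul_zero]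
  lie_mem := by
    intro x m hm y hy
    have h1 : ⁅x, ⁅m, y⁆⁆ = (0 : L) := by rw [hm y hy, lie_zero]
    have h2 : ⁅m, ⁅x, y⁆⁆ = (0 : L) := hm _ (I.lie_mem hy)
    show ⁅⁅x, m⁆, y⁆ = (0 : L)
    rw [lie_lie, h1, h2, sub_zero]

/-- The centre `Z(I)` of an ideal `I`, as an ideal of `L`. -/
def idealCenter (I : LieIdeal F L) : LieIdeal F L where
  carrier := {x : L | x ∈ I ∧ ∀ y ∈ I, ⁅x, y⁆ = 0}
  zero_mem' := ⟨I.zero_mem, by intro y hy; simp⟩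
  add_mem' := by
    intro a b ha hb
    exact ⟨I.add_mem ha.1 hb.1, fun y hy => by rw [add_lie, ha.2 y hy, hb.2 y hy, add_zero]⟩
  smul_mem' := by
    intro c x hx
    exact ⟨I.smul_mem c hx.1, fun y hy => by rw [smul_lie, hx.2 y hy, smul_zero]⟩
  lie_mem := by
    intro x m hm
    refine ⟨I.lie_mem hm.1, fun y hy => ?_⟩
    have h1 : ⁅x, ⁅m, y⁆⁆ = (0 : L) := by rw [hm.2 y hy, lie_zero]
    have h2 : ⁅m, ⁅x, y⁆⁆ = (0 : L) := hm.2 _ (I.lie_mem hy)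
    show ⁅⁅x, m⁆, y⁆ = (0 : L)
    rw [lie_lie, h1, h2, sub_zero]

/-- The centraliser `C_L(A/B)` of a chief factor, as an ideal of `L`. -/
def chiefCentralizer (A B : LieIdeal F L) : LieIdeal F L where
  carrier := {x : L | ∀ a ∈ A, ⁅x, a⁆ ∈ B}
  zero_mem' := by intro a ha; simp [B.zero_mem]
  add_mem' := by intro x y hx hy a ha; rw [add_lie]; exact B.add_mem (hx a ha) (hy a ha)
  smul_mem' := by intro c x hx a ha; rw [smul_lie]; exact B.smul_mem c (hx a ha)
  lie_mem := by
    intro x m hm a ha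
    show ⁅⁅x, m⁆, a⁆ ∈ B
    rw [lie_lie]
    exact B.sub_mem (B.lie_mem (hm a ha)) (hm _ (A.lie_mem ha))

/-- `A/Z` is a minimal ideal of `L/Z` (via the ideal correspondence). -/
def IsMinModIdeal (Z A : LieIdeal F L) : Prop :=
  Z < A ∧ ∀ B : LieIdeal F L, Z ≤ B → B ≤ A → B = Z ∨ B = A

/-- `A` is a minimal ideal of `L`. -/
def IsMinimalIdeal (A : LieIdeal F L) : Prop := IsMinModIdeal ⊥ A

/-- An ideal `A` of `L` is quasi-minimal if `A² = A` and `A/Z(A)` is a minimal ideal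
of `L/Z(A)`. -/
def IsQuasiMinimal (A : LieIdeal F L) : Prop :=
  ⁅A, A⁆ = A ∧ IsMinModIdeal (idealCenter A) A

end IdealDefs

section MoreDefs

variable (F : Type*) [Field F] (L : Type*) [LieRing L] [LieAlgebra F L]

/-- `E†(L)`: the subalgebra generated by the quasi-minimal components of `L`. -/
noncomputable def Edagger : LieSubalgebra F L :=
  LieSubalgebra.lieSpan F L (⋃ A ∈ {A : LieIdeal F L | IsQuasiMinimal A}, (A : Set L))

/-- `N†(L) = N(L) + E†(L)`: the quasi-minimal radical of `L`. -/
noncomputable def Ndagger : LieSubalgebra F L :=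
  LieIdeal.toLieSubalgebra F L (nilrad F L) ⊔ Edagger F L

/-- The generalised nilradical `N*(L)`: the ideal containing `N = N(L)` with
`N*(L)/N` the sum of all minimal ideals of `L/N` contained in `(N + C_L(N))/N`. -/
noncomputable def Nstar : LieIdeal F L :=
  nilrad F L ⊔ sSup {A : LieIdeal F L | IsMinModIdeal (nilrad F L) A ∧
    A ≤ nilrad F L ⊔ centralizer (nilrad F L)}

/-- The Frattini ideal: the largest ideal contained in every maximal subalgebra. -/
def frattini : LieIdeal F L :=
  sSup {I : LieIdeal F L | ∀ M : LieSubalgebra F L, IsCoatom M → (I : Set L) ⊆ M}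

/-- `Ñ(L)`: the ideal with `Ñ(L)/φ(L) = Soc (L/φ(L))`. -/
noncomputable def Ntilde : LieIdeal F L :=
  frattini F L ⊔ sSup {A : LieIdeal F L | IsMinModIdeal (frattini F L) A}

/-- A characteristic ideal: one invariant under all derivations. -/
def IsCharIdeal (J : LieIdeal F L) : Prop :=
  ∀ D : LieDerivation F L L, ∀ x ∈ J, D x ∈ J

/-- The characteristic radical `R_c(L)`: the sum of all solvable characteristic ideals. -/
noncomputable def charRadical : LieIdeal F L :=
  sSup {J : LieIdeal F L | LieAlgebra.IsSolvable J ∧ IsCharIdeal F L J}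

/-- A subideal: a subalgebra joined to `L` by a chain of successive ideals. -/
def IsSubideal (S : LieSubalgebra F L) : Prop :=
  ∃ n : ℕ, ∃ c : Fin (n + 1) → LieSubalgebra F L,
    c 0 = S ∧ c (Fin.last n) = ⊤ ∧
    ∀ i : Fin n, c i.castSucc ≤ c i.succ ∧
      ∀ x ∈ c i.succ, ∀ y ∈ c i.castSucc, ⁅x, y⁆ ∈ c i.castSucc

end MoreDefs

/-! An ideal of `L` inside a quasi-minimal `P` lies in `Z(P)` or is `P`; hence `P ∩ Q ⊆ Z(P)` for
distinct quasi-minimal `P, Q`, and `P ∩ R(L) = Z(P)` since `P` is perfect and so not solvable.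
A perfect ideal centralises every ideal it maps into its own centre, which gives `⁅P, Q⁆ = 0`
and `⁅P, R(L)⁆ = 0`. -/

section IdealCenter

variable {F : Type*} [Field F] {L : Type*} [LieRing L] [LieAlgebra F L]

lemma lie_eq_zero_of_mem_idealCenter {P : LieIdeal F L} {x z : L} (hx : x ∈ P)
    (hz : z ∈ idealCenter P) : ⁅x, z⁆ = 0 := by
  rw [← lie_skew, hz.2 x hx, neg_zero]

lemma idealCenter_lie_eq_bot (P : LieIdeal F L) : ⁅idealCenter P, P⁆ = ⊥ :=
  (LieSubmodule.lie_eq_bot_iff _ _).mpr fun _ hz _ hx => hz.2 _ hx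

lemma idealCenter_le_radical (P : LieIdeal F L) : idealCenter P ≤ radical F L := by
  have : IsLieAbelian (idealCenter P) :=
    ⟨fun x y => Subtype.ext (x.2.2 y y.2.1)⟩
  exact le_sSup (ofAbelianIsSolvable (L := idealCenter P))

lemma eq_bot_of_isSolvable_of_lie_self {I : LieIdeal F L} [IsSolvable I] (hI : ⁅I, I⁆ = I) :
    I = ⊥ := by
  obtain ⟨k, hk⟩ := IsSolvable.solvable F I
  rw [LieIdeal.derivedSeries_eq_bot_iff] at hk
  have hconst : ∀ n, derivedSeriesOfIdeal F L n I = I := by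
    intro n
    induction n with
    | zero => rfl
    | succ n ih => rw [derivedSeriesOfIdeal_succ, ih, hI]
  rwa [hconst] at hk

/-- `⁅⁅p₁, p₂⁆, x⁆ = ⁅p₁, ⁅p₂, x⁆⁆ - ⁅p₂, ⁅p₁, x⁆⁆` and both terms vanish since `⁅pᵢ, x⁆ ∈ Z(P)`. -/
lemma lie_eq_bot_of_lie_le_idealCenter {P X : LieIdeal F L} (hP : ⁅P, P⁆ = P)
    (h : ⁅P, X⁆ ≤ idealCenter P) : ⁅P, X⁆ = ⊥ := by
  suffices hPX : ⁅P, P⁆ ≤ centralizer X by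
    rw [hP] at hPX
    exact (LieSubmodule.lie_eq_bot_iff _ _).mpr hPX
  rw [LieSubmodule.lie_le_iff]
  intro p₁ hp₁ p₂ hp₂ x hx
  have e₁ := lie_eq_zero_of_mem_idealCenter hp₁ (h (LieSubmodule.lie_mem_lie hp₂ hx))
  have e₂ := lie_eq_zero_of_mem_idealCenter hp₂ (h (LieSubmodule.lie_mem_lie hp₁ hx))
  rw [lie_lie, e₁, e₂, sub_zero]

end IdealCenter

namespace IsQuasiMinimal

variable {F : Type*} [Field F] {L : Type*} [LieRing L] [LieAlgebra F L] {P Q C : LieIdeal F L}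

lemma ne_bot (hP : IsQuasiMinimal P) : P ≠ ⊥ := by
  rintro rfl
  exact hP.2.1.not_ge bot_le

/-- By minimality `Z(P) ⊔ C` is `Z(P)` or `P`; in the second case
`P = ⁅P, P⁆ = ⁅Z(P) ⊔ C, P⁆ ≤ C`. -/
lemma le_idealCenter_or_le (hP : IsQuasiMinimal P) (hC : C ≤ P) :
    C ≤ idealCenter P ∨ P ≤ C := by
  rcases hP.2.2 (idealCenter P ⊔ C) le_sup_left (sup_le (fun _ h => h.1) hC) with h | h
  · exact Or.inl (le_sup_right.trans h.le)
  · refine Or.inr ?_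
    calc P = ⁅idealCenter P ⊔ C, P⁆ := by rw [h, hP.1]
      _ = ⁅C, P⁆ := by rw [LieSubmodule.sup_lie, idealCenter_lie_eq_bot, bot_sup_eq]
      _ ≤ C := LieSubmodule.lie_le_left C P

lemma inf_le_idealCenter (hP : IsQuasiMinimal P) (hQ : IsQuasiMinimal Q) (hne : P ≠ Q) :
    P ⊓ Q ≤ idealCenter P := by
  refine (hP.le_idealCenter_or_le inf_le_left).resolve_right fun hP_le => ?_
  have hPQ : P ≤ Q := hP_le.trans inf_le_right
  rcases hQ.le_idealCenter_or_le (inf_le_right (a := P)) with hZ | hQP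
  · refine hP.ne_bot (hP.1.symm.trans ((LieSubmodule.lie_eq_bot_iff _ _).mpr ?_))
    exact fun x hx y hy => (hZ ⟨hx, hPQ hx⟩).2 y (hPQ hy)
  · exact hne (hPQ.antisymm (hQP.trans inf_le_left))

lemma lie_eq_bot (hP : IsQuasiMinimal P) (hQ : IsQuasiMinimal Q) (hne : P ≠ Q) :
    ⁅P, Q⁆ = ⊥ :=
  lie_eq_bot_of_lie_le_idealCenter hP.1 <| (le_inf (LieSubmodule.lie_le_left P Q)
    (LieSubmodule.lie_le_right Q P)).trans (hP.inf_le_idealCenter hQ hne)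

variable [IsNoetherian F L]

/-- `P ⊓ R(L) ≤ Z(P)`, for otherwise `P ≤ R(L)` would be a solvable perfect nonzero ideal. -/
lemma idealCenter_eq_inf_radical (hP : IsQuasiMinimal P) :
    idealCenter P = P ⊓ radical F L := by
  refine le_antisymm (le_inf (fun _ h => h.1) (idealCenter_le_radical P)) ?_
  refine (hP.le_idealCenter_or_le inf_le_left).resolve_right fun hPR => hP.ne_bot ?_
  have : IsSolvable P := le_solvable_ideal_solvable (hPR.trans inf_le_right) inferInstance
  exact eq_bot_of_isSolvable_of_lie_self hP.1

lemma lie_radical_eq_bot (hP : IsQuasiMinimal P) : ⁅P, radical F L⁆ = ⊥ :=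
  lie_eq_bot_of_lie_le_idealCenter hP.1 <| hP.idealCenter_eq_inf_radical ▸
    le_inf (LieSubmodule.lie_le_left _ _) (LieSubmodule.lie_le_right _ _)

lemma inf_le_idealCenter_radical (hP : IsQuasiMinimal P) (hQ : IsQuasiMinimal Q) (hne : P ≠ Q) :
    P ⊓ Q ≤ idealCenter (radical F L) := by
  intro x hx
  have hxR : x ∈ P ⊓ radical F L :=
    hP.idealCenter_eq_inf_radical ▸ hP.inf_le_idealCenter hQ hne hx
  exact ⟨hxR.2, (LieSubmodule.lie_eq_bot_iff _ _).mp hP.lie_radical_eq_bot x hxR.1⟩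

end IsQuasiMinimal

lemma coe_lieSpan_iUnion_lieIdeal {F : Type*} [Field F] {L : Type*} [LieRing L]
    [LieAlgebra F L] (S : Set (LieIdeal F L)) :
    (LieSubalgebra.lieSpan F L (⋃ A ∈ S, (A : Set L)) : Set L) = (sSup S : LieIdeal F L) := by
  apply Set.Subset.antisymm
  · refine (LieSubalgebra.lieSpan_le (K := (sSup S).toLieSubalgebra)).mpr ?_
    exact Set.iUnion₂_subset fun A hA => le_sSup (α := LieIdeal F L) hA
  · refine (sSup_le ?_ : sSup {(A : Submodule F L) | A ∈ S} ≤
      (LieSubalgebra.lieSpan F L (⋃ A ∈ S, (A : Set L))).toSubmodule)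
    rintro _ ⟨A, hA, rfl⟩ x hx
    exact LieSubalgebra.subset_lieSpan (Set.mem_biUnion hA hx)

/-- Distinct quasi-minimal components commute: `E†(L)` is the sum of the quasi-minimal
components, and for distinct quasi-minimal components `P, Q` we have `[P,Q] = 0` and
`P ∩ Q ⊆ Z(R)`. -/
theorem stmt_11 (F : Type*) [Field F] (L : Type*) [LieRing L] [LieAlgebra F L]
    [FiniteDimensional F L] :
    (Edagger F L : Set L) =
        ((sSup {A : LieIdeal F L | IsQuasiMinimal A} : LieIdeal F L) : Set L) ∧
      ∀ P Q : LieIdeal F L, IsQuasiMinimal P → IsQuasiMinimal Q → P ≠ Q →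
        ⁅P, Q⁆ = (⊥ : LieIdeal F L) ∧
          P ⊓ Q ≤ idealCenter (LieAlgebra.radical F L) :=
  ⟨coe_lieSpan_iUnion_lieIdeal _, fun _ _ hP hQ hne =>
    ⟨hP.lie_eq_bot hQ hne, hP.inf_le_idealCenter_radical hQ hne⟩⟩

end Paper
end

section
/- Let L be a finite-dimensional Lie algebra over any field F, with nilradical N = N(L). Then C_L(N†(L)) = Z(N); in particular, C_L(N†(L)) ⊆ N†(L). -/
namespace Paper

open LieAlgebra

/-! A quasi-minimal ideal `A` is perfect and not nilpotent, so `A ∩ N = Z(A)`; hence `Z(N)`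
maps `A` into `Z(A)` and therefore kills `A = A²`, i.e. `Z(N) ⊆ C := C_L(N†(L))`.
Conversely, if `C ⊄ N`, take an ideal `A` minimal over `Z(N) = C ∩ N` inside `C`. Since `A`
centralises `Z(N)`, either `A² ⊆ Z(N)` or `A²` is itself quasi-minimal; in both cases
`A² ⊆ N†(L)`, so `[A, A²] = 0`, `A` is nilpotent and `A ⊆ C ∩ N = Z(N)`, a contradiction.
-/

section QuasiMinimalRadical

variable {F : Type*} [Field F] {L : Type*} [LieRing L] [LieAlgebra F L]

lemma le_centralizer_iff {I J : LieIdeal F L} : I ≤ centralizer J ↔ ⁅I, J⁆ = ⊥ := by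
  rw [LieSubmodule.lie_eq_bot_iff]
  rfl

lemma le_centralizer_comm {I J : LieIdeal F L} : I ≤ centralizer J ↔ J ≤ centralizer I := by
  rw [le_centralizer_iff, le_centralizer_iff, LieSubmodule.lie_comm]

lemma centralizer_anti {I J : LieIdeal F L} (h : I ≤ J) : centralizer J ≤ centralizer I :=
  fun _ hx y hy => hx y (h hy)

lemma idealCenter_eq_inf (I : LieIdeal F L) : idealCenter I = I ⊓ centralizer I :=
  LieSubmodule.ext _ _ fun _ => Iff.rfl

lemma idealCenter_le (I : LieIdeal F L) : idealCenter I ≤ I := by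
  rw [idealCenter_eq_inf]
  exact inf_le_left

lemma idealCenter_le_centralizer (I : LieIdeal F L) : idealCenter I ≤ centralizer I := by
  rw [idealCenter_eq_inf]
  exact inf_le_right

lemma lie_self_eq_of_sup_eq {A B Z : LieIdeal F L} (hZ : ⁅A, Z⁆ = ⊥) (hB : B ≤ A)
    (h : B ⊔ Z = A) : ⁅A, A⁆ = ⁅B, B⁆ := by
  have hBZ : ⁅B, Z⁆ = ⊥ := eq_bot_iff.mpr (hZ ▸ LieSubmodule.mono_lie_left Z hB)
  have hZZ : ⁅Z, Z⁆ = ⊥ :=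
    eq_bot_iff.mpr (hZ ▸ LieSubmodule.mono_lie_left Z (h ▸ le_sup_right))
  rw [← h, LieSubmodule.sup_lie, LieSubmodule.lie_sup, LieSubmodule.lie_sup, hBZ,
    LieSubmodule.lie_comm Z B, hBZ, hZZ, sup_bot_eq, sup_bot_eq, sup_bot_eq]

lemma IsMinModIdeal.isQuasiMinimal_lie_self {Z A : LieIdeal F L} (hA : IsMinModIdeal Z A)
    (hZ : ⁅A, Z⁆ = ⊥) (hAA : ¬ ⁅A, A⁆ ≤ Z) : IsQuasiMinimal ⁅A, A⁆ := by
  have sup_eq : ∀ B ≤ A, ¬ B ≤ Z → B ⊔ Z = A := fun B hB hBZ =>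
    (hA.2 _ le_sup_right (sup_le hB hA.1.le)).resolve_left fun h => hBZ (h ▸ le_sup_left)
  have hA'A : ⁅A, A⁆ ≤ A := LieSubmodule.lie_le_right A A
  have hperf : ⁅⁅A, A⁆, ⁅A, A⁆⁆ = ⁅A, A⁆ :=
    (lie_self_eq_of_sup_eq hZ hA'A (sup_eq _ hA'A hAA)).symm
  refine ⟨hperf, lt_of_le_of_ne (idealCenter_le _) fun hab => hAA ?_, fun B hB₁ hB₂ => ?_⟩
  · have : ⁅⁅A, A⁆, ⁅A, A⁆⁆ = ⊥ :=
      le_centralizer_iff.mp (hab.ge.trans (idealCenter_le_centralizer _))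
    rw [← hperf, this]
    exact bot_le
  by_cases hBZ : B ≤ Z
  · refine Or.inl (le_antisymm ?_ hB₁)
    rw [idealCenter_eq_inf]
    refine le_inf hB₂ (le_centralizer_comm.mp ?_)
    exact hA'A.trans ((le_centralizer_iff.mpr hZ).trans (centralizer_anti hBZ))
  · have hBA : B ≤ A := hB₂.trans hA'A
    refine Or.inr (le_antisymm hB₂ ?_)
    calc ⁅A, A⁆ = ⁅B, B⁆ := lie_self_eq_of_sup_eq hZ hBA (sup_eq _ hBA hBZ)
      _ ≤ B := LieSubmodule.lie_le_right B B

variable (F L) in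
noncomputable def ndaggerIdeal : LieIdeal F L :=
  nilrad F L ⊔ sSup {A : LieIdeal F L | IsQuasiMinimal A}

lemma mem_ndaggerIdeal {x : L} : x ∈ ndaggerIdeal F L ↔ x ∈ Ndagger F L := by
  refine ⟨fun hx => ?_, fun hx => ?_⟩
  · have : (ndaggerIdeal F L : Submodule F L) ≤ (Ndagger F L).toSubmodule := by
      refine sup_le (fun y hy => (le_sup_left : _ ≤ Ndagger F L) hy) (sSup_le ?_)
      rintro _ ⟨A, hA, rfl⟩ y hy
      exact (le_sup_right : _ ≤ Ndagger F L)
        (LieSubalgebra.subset_lieSpan (Set.mem_iUnion₂.mpr ⟨A, hA, hy⟩))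
    exact this hx
  · have : Ndagger F L ≤ (ndaggerIdeal F L).toLieSubalgebra := by
      refine sup_le (fun y hy => (le_sup_left : _ ≤ ndaggerIdeal F L) hy) ?_
      rw [Edagger, LieSubalgebra.lieSpan_le]
      intro y hy
      obtain ⟨A, hA, hyA⟩ := Set.mem_iUnion₂.mp hy
      exact (le_sup_right : _ ≤ ndaggerIdeal F L) (le_sSup (α := LieIdeal F L) hA hyA)
    exact this hx

lemma nilrad_le_ndaggerIdeal : nilrad F L ≤ ndaggerIdeal F L := le_sup_left

lemma IsQuasiMinimal.le_ndaggerIdeal {A : LieIdeal F L} (hA : IsQuasiMinimal A) :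
    A ≤ ndaggerIdeal F L :=
  le_sup_of_le_right (le_sSup hA)

variable [FiniteDimensional F L]

lemma le_nilrad_of_lie_lie_eq_bot {A : LieIdeal F L} (h : ⁅A, ⁅A, A⁆⁆ = ⊥) :
    A ≤ nilrad F L := by
  -- Engel: every `ad a` squares to zero on `A`.
  refine le_sSup ((LieModule.isNilpotent_iff_forall' (R := F)).mpr fun a => ⟨2, ?_⟩)
  ext b
  exact (LieSubmodule.lie_eq_bot_iff _ _).mp h a a.2 _ (LieSubmodule.lie_mem_lie a.2 b.2)

lemma idealCenter_le_nilrad (I : LieIdeal F L) : idealCenter I ≤ nilrad F L := by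
  refine le_nilrad_of_lie_lie_eq_bot ?_
  have : ⁅idealCenter I, idealCenter I⁆ = ⊥ := le_centralizer_iff.mp
    ((idealCenter_le_centralizer I).trans (centralizer_anti (idealCenter_le I)))
  rw [this, LieSubmodule.lie_bot]

lemma nilrad_le_radical : nilrad F L ≤ radical F L := sSup_le fun I hI => by
  have : LieModule.IsNilpotent I I := hI
  exact (LieIdeal.solvable_iff_le_radical (R := F) (L := L) I).mp inferInstance

lemma eq_bot_of_le_nilrad_of_lie_self_eq_self {A : LieIdeal F L} (hN : A ≤ nilrad F L)
    (hA : ⁅A, A⁆ = A) : A = ⊥ := by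
  have : LieAlgebra.IsSolvable A :=
    (LieIdeal.solvable_iff_le_radical (R := F) (L := L) A).mpr (hN.trans nilrad_le_radical)
  obtain ⟨k, hk⟩ := (LieAlgebra.isSolvable_iff F A).mp this
  rw [LieIdeal.derivedSeries_eq_bot_iff] at hk
  have : ∀ k, LieAlgebra.derivedSeriesOfIdeal F L k A = A := fun k => by
    induction k with
    | zero => rfl
    | succ k ih => rw [LieAlgebra.derivedSeriesOfIdeal_succ, ih, hA]
  rwa [this] at hk

lemma IsQuasiMinimal.inf_nilrad_eq_idealCenter {A : LieIdeal F L} (hA : IsQuasiMinimal A) :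
    A ⊓ nilrad F L = idealCenter A := by
  refine (hA.2.2 _ (le_inf (idealCenter_le A) (idealCenter_le_nilrad A)) inf_le_left).resolve_right
    fun h => ?_
  have hbot := eq_bot_of_le_nilrad_of_lie_self_eq_self (inf_eq_left.mp h) hA.1
  exact not_lt_bot (hbot ▸ hA.2.1)

lemma IsQuasiMinimal.le_centralizer_idealCenter_nilrad {A : LieIdeal F L}
    (hA : IsQuasiMinimal A) : A ≤ centralizer (idealCenter (nilrad F L)) := by
  rw [← hA.1, LieSubmodule.lie_le_iff]
  intro b hb c hc z hz
  have hZA : ∀ a ∈ A, ⁅a, z⁆ ∈ idealCenter A := fun a ha => by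
    rw [← hA.inf_nilrad_eq_idealCenter]
    exact ⟨lie_mem_left F L A a z ha, lie_mem_right F L (nilrad F L) a z hz.1⟩
  have hcomm : ∀ a ∈ A, ∀ w ∈ idealCenter A, ⁅a, w⁆ = 0 := fun a ha w hw => by
    rw [← lie_skew, hw.2 a ha, neg_zero]
  rw [lie_lie, hcomm b hb _ (hZA c hc), hcomm c hc _ (hZA b hb), sub_zero]

lemma idealCenter_nilrad_le_centralizer_ndaggerIdeal :
    idealCenter (nilrad F L) ≤ centralizer (ndaggerIdeal F L) := by
  rw [le_centralizer_comm, ndaggerIdeal, sup_le_iff, sSup_le_iff]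
  exact ⟨le_centralizer_comm.mp (idealCenter_le_centralizer _),
    fun _ hA => hA.le_centralizer_idealCenter_nilrad⟩

lemma centralizer_ndaggerIdeal_le_nilrad : centralizer (ndaggerIdeal F L) ≤ nilrad F L := by
  set C := centralizer (ndaggerIdeal F L)
  set Z := idealCenter (nilrad F L)
  have hCN : ∀ A ≤ C, A ≤ nilrad F L → A ≤ Z := fun A hAC hAN => by
    rw [show Z = _ from idealCenter_eq_inf _]
    exact le_inf hAN (hAC.trans (centralizer_anti nilrad_le_ndaggerIdeal))
  by_contra hC
  have hZC : Z < C := lt_of_le_of_ne idealCenter_nilrad_le_centralizer_ndaggerIdeal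
    fun h => hC (h ▸ idealCenter_le _)
  obtain ⟨A, ⟨hZA, hAC⟩, hmin⟩ :=
    (LieSubmodule.wellFoundedLT_of_isArtinian F L L).wf.has_min
      {I : LieIdeal F L | Z < I ∧ I ≤ C} ⟨C, hZC, le_rfl⟩
  have hA : IsMinModIdeal Z A := ⟨hZA, fun B hZB hBA =>
    (eq_or_lt_of_le hZB).imp Eq.symm fun hZB =>
      (eq_or_lt_of_le hBA).resolve_right (hmin B ⟨hZB, hBA.trans hAC⟩)⟩
  have hAZ : ⁅A, Z⁆ = ⊥ := le_centralizer_iff.mp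
    (hAC.trans (centralizer_anti ((idealCenter_le _).trans nilrad_le_ndaggerIdeal)))
  have hA'Q : ⁅A, A⁆ ≤ ndaggerIdeal F L := by
    by_cases h : ⁅A, A⁆ ≤ Z
    · exact h.trans ((idealCenter_le _).trans nilrad_le_ndaggerIdeal)
    · exact (hA.isQuasiMinimal_lie_self hAZ h).le_ndaggerIdeal
  have hAA : ⁅A, ⁅A, A⁆⁆ = ⊥ := le_centralizer_iff.mp (hAC.trans (centralizer_anti hA'Q))
  exact hZA.not_ge (hCN A hAC (le_nilrad_of_lie_lie_eq_bot hAA))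

theorem centralizer_ndaggerIdeal_eq :
    centralizer (ndaggerIdeal F L) = idealCenter (nilrad F L) := by
  refine le_antisymm ?_ idealCenter_nilrad_le_centralizer_ndaggerIdeal
  rw [idealCenter_eq_inf]
  exact le_inf centralizer_ndaggerIdeal_le_nilrad (centralizer_anti nilrad_le_ndaggerIdeal)

end QuasiMinimalRadical

/-- `C_L(N†(L)) = Z(N)`; in particular `C_L(N†(L)) ⊆ N†(L)`. -/
theorem stmt_12 (F : Type*) [Field F] (L : Type*) [LieRing L] [LieAlgebra F L]
    [FiniteDimensional F L] :
    {x : L | ∀ y ∈ Ndagger F L, ⁅x, y⁆ = 0} = (idealCenter (nilrad F L) : Set L) ∧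
      {x : L | ∀ y ∈ Ndagger F L, ⁅x, y⁆ = 0} ⊆ (Ndagger F L : Set L) := by
  have hC : {x : L | ∀ y ∈ Ndagger F L, ⁅x, y⁆ = 0} =
      (centralizer (ndaggerIdeal F L) : Set L) := by
    ext x
    simp only [← mem_ndaggerIdeal]
    rfl
  rw [hC, centralizer_ndaggerIdeal_eq]
  exact ⟨rfl, fun x hx => mem_ndaggerIdeal.mp (nilrad_le_ndaggerIdeal (idealCenter_le _ hx))⟩

end Paper
end

section
/- Let L be a finite-dimensional Lie algebra over any field F and suppose L = I ⊕ J, where I and J are ideals of L. Then N†(L) = N†(I) ⊕ N†(J). -/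
namespace Paper

open LieAlgebra

/-!
Because `[I, J] ⊆ I ∩ J = 0`, the ideals of `I` are exactly the ideals of `L` contained in `I`;
this correspondence preserves `A²`, `Z(A)` and covering relations, hence quasi-minimality.
A quasi-minimal ideal `A` of `L` lies in `I` or in `J`: by minimality of `A/Z(A)`, otherwise both
`A ∩ I` and `A ∩ J` lie in `Z(A)`, whereas `A = A² ⊆ [A, I] + [A, J] ⊆ A ∩ I + A ∩ J`.
For the nilradicals, the inclusion `I → L` and the projection `L → I` along `J` map nilpotent
ideals onto nilpotent ideals.
-/

section

variable {R : Type*} [CommRing R] {L : Type*} [LieRing L] [LieAlgebra R L]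

lemma isNilpotent_of_image_eq {L' : Type*} [LieRing L'] [LieAlgebra R L'] (f : L →ₗ⁅R⁆ L')
    {K : LieIdeal R L} {K' : LieIdeal R L'} (hK : f '' K = K') (hn : LieModule.IsNilpotent K K) :
    LieModule.IsNilpotent K' K' := by
  let g : K →ₗ⁅R⁆ K' :=
    { toFun k := ⟨f k, by rw [← LieSubmodule.mem_coe, ← hK]; exact ⟨k, k.2, rfl⟩⟩
      map_add' _ _ := Subtype.ext (map_add f _ _)
      map_smul' _ _ := Subtype.ext (map_smul f _ _)
      map_lie' := Subtype.ext (f.map_lie _ _) }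
  refine Function.Surjective.lieAlgebra_isNilpotent (f := g) ?_
  rintro ⟨y, hy⟩
  obtain ⟨x, hx, rfl⟩ : y ∈ f '' K := hK ▸ hy
  exact ⟨⟨x, hx⟩, rfl⟩

variable {I J : LieIdeal R L}

lemma lie_eq_zero_of_disjoint (h : Disjoint I J) {x y : L} (hx : x ∈ I) (hy : y ∈ J) :
    ⁅x, y⁆ = 0 := by
  have hIJ : ⁅I, J⁆ = ⊥ := eq_bot_iff.mpr (h.eq_bot ▸ LieSubmodule.lie_le_inf I J)
  exact (LieSubmodule.lie_eq_bot_iff _ _).mp hIJ x hx y hy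

def sumSubalgebra (h : Disjoint I J) (S : LieSubalgebra R I) (T : LieSubalgebra R J) :
    LieSubalgebra R L where
  carrier := {x | ∃ y ∈ S, ∃ z ∈ T, x = (y : L) + (z : L)}
  zero_mem' := ⟨0, zero_mem S, 0, zero_mem T, by simp⟩
  add_mem' := by
    rintro _ _ ⟨y, hy, z, hz, rfl⟩ ⟨y', hy', z', hz', rfl⟩
    refine ⟨y + y', add_mem hy hy', z + z', add_mem hz hz', ?_⟩
    push_cast
    abel
  smul_mem' := by
    rintro c _ ⟨y, hy, z, hz, rfl⟩
    exact ⟨c • y, S.smul_mem c hy, c • z, T.smul_mem c hz, by simp [smul_add]⟩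
  lie_mem' := by
    rintro _ _ ⟨y, hy, z, hz, rfl⟩ ⟨y', hy', z', hz', rfl⟩
    refine ⟨⁅y, y'⁆, S.lie_mem hy hy', ⁅z, z'⁆, T.lie_mem hz hz', ?_⟩
    have hyz' : ⁅(y : L), (z' : L)⁆ = 0 := lie_eq_zero_of_disjoint h y.2 z'.2
    have hzy' : ⁅(z : L), (y' : L)⁆ = 0 := lie_eq_zero_of_disjoint h.symm z.2 y'.2
    simp only [add_lie, lie_add, hyz', hzy', add_zero, zero_add]
    rfl

end

section DirectSum

variable {R : Type*} [CommRing R] {L : Type*} [LieRing L] [LieAlgebra R L] {I J : LieIdeal R L}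
  (h : IsCompl I J)

lemma projectionOnto_eq_of_sub_mem {x a : L} (ha : a ∈ I) (hxa : x - a ∈ J) :
    Submodule.projectionOnto _ _ (LieSubmodule.isCompl_toSubmodule.mpr h) x = ⟨a, ha⟩ := by
  have := Submodule.projectionOnto_apply_of_mem_right
    (LieSubmodule.isCompl_toSubmodule.mpr h) hxa
  rwa [map_sub, Submodule.projectionOnto_apply_of_mem_left _ ha, sub_eq_zero] at this

noncomputable def projection : L →ₗ⁅R⁆ I where
  __ := Submodule.projectionOnto _ _ (LieSubmodule.isCompl_toSubmodule.mpr h)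
  map_lie' {x y} := by
    set p := Submodule.projectionOnto _ _ (LieSubmodule.isCompl_toSubmodule.mpr h)
    refine projectionOnto_eq_of_sub_mem h (I.lie_mem (p y).2) ?_
    have hsplit : ⁅x, y⁆ - ⁅(p x : L), (p y : L)⁆ = ⁅x - p x, y⁆ + ⁅(p x : L), y - p y⁆ := by
      simp only [sub_lie, lie_sub]; abel
    change ⁅x, y⁆ - ⁅(p x : L), (p y : L)⁆ ∈ J
    rw [hsplit]
    exact J.add_mem (lie_mem_left R L J _ _ (Submodule.sub_projection_mem _ x))
      (J.lie_mem (Submodule.sub_projection_mem _ y))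

lemma sub_projection_mem (x : L) : x - projection h x ∈ J :=
  Submodule.sub_projection_mem _ x

lemma projection_add_projection (x : L) :
    (projection h x : L) + projection h.symm x = x :=
  Submodule.projection_add_projection_eq_self _ x

lemma projection_surjective : Function.Surjective (projection h) :=
  Submodule.projectionOnto_surjective _

lemma lie_projection (x : L) {a : L} (ha : a ∈ I) :
    ⁅(projection h x : L), a⁆ = ⁅x, a⁆ := by
  rw [← sub_eq_zero, ← sub_lie, ← neg_sub, neg_lie,
    lie_eq_zero_of_disjoint h.symm.disjoint (sub_projection_mem h x) ha, neg_zero]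

noncomputable def liftIdeal : LieIdeal R I ↪o LieIdeal R L :=
  OrderEmbedding.ofMapLEIff
    (fun K ↦
      { (K : Submodule R I).map (I.incl : I →ₗ[R] L) with
        lie_mem := by
          rintro x _ ⟨a, ha, rfl⟩
          exact ⟨⁅projection h x, a⁆, K.lie_mem ha, lie_projection h x a.2⟩ })
    (fun K K' ↦ by
      rw [← LieSubmodule.toSubmodule_le_toSubmodule, ← LieSubmodule.toSubmodule_le_toSubmodule]
      exact Submodule.map_le_map_iff_of_injective I.incl_injective _ _)

lemma coe_liftIdeal (K : LieIdeal R I) : (liftIdeal h K : Set L) = I.incl '' K :=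
  Submodule.map_coe _ _

lemma mem_liftIdeal {K : LieIdeal R I} {x : L} : x ∈ liftIdeal h K ↔ ∃ a ∈ K, (a : L) = x :=
  Iff.rfl

@[simp]
lemma coe_mem_liftIdeal {K : LieIdeal R I} {a : I} : (a : L) ∈ liftIdeal h K ↔ a ∈ K := by
  simp [mem_liftIdeal]

lemma liftIdeal_le (K : LieIdeal R I) : liftIdeal h K ≤ I := by
  rintro _ ⟨a, -, rfl⟩
  exact a.2

lemma liftIdeal_comap_incl {A : LieIdeal R L} (hA : A ≤ I) :
    liftIdeal h (LieIdeal.comap I.incl A) = A := by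
  ext x
  refine ⟨?_, fun hx ↦ ⟨⟨x, hA hx⟩, hx, rfl⟩⟩
  rintro ⟨a, ha, rfl⟩
  exact ha

lemma comap_incl_liftIdeal (K : LieIdeal R I) : LieIdeal.comap I.incl (liftIdeal h K) = K := by
  ext a
  simp

lemma range_liftIdeal : Set.range (liftIdeal h) = Set.Iic I := by
  ext A
  exact ⟨by rintro ⟨K, rfl⟩; exact liftIdeal_le h K,
    fun hA ↦ ⟨_, liftIdeal_comap_incl h hA⟩⟩

lemma liftIdeal_covBy_liftIdeal_iff {K K' : LieIdeal R I} :
    liftIdeal h K ⋖ liftIdeal h K' ↔ K ⋖ K' :=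
  Set.OrdConnected.apply_covBy_apply_iff _ (range_liftIdeal h ▸ Set.ordConnected_Iic)

lemma liftIdeal_lie (K K' : LieIdeal R I) :
    liftIdeal h ⁅K, K'⁆ = ⁅liftIdeal h K, liftIdeal h K'⁆ := by
  conv_lhs => rw [← comap_incl_liftIdeal h K, ← comap_incl_liftIdeal h K',
    LieIdeal.comap_bracket_incl_of_le _ (liftIdeal_le h K) (liftIdeal_le h K')]
  exact liftIdeal_comap_incl h ((LieSubmodule.lie_le_right _ _).trans (liftIdeal_le h K'))

end DirectSum

section

variable {F : Type*} [Field F] {L : Type*} [LieRing L] [LieAlgebra F L]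

lemma nilrad_le_comap_nilrad {L' : Type*} [LieRing L'] [LieAlgebra F L'] (f : L →ₗ⁅F⁆ L')
    (hf : ∀ K : LieIdeal F L, ∃ K' : LieIdeal F L', f '' K = K') :
    nilrad F L ≤ LieIdeal.comap f (nilrad F L') :=
  sSup_le fun K hK x hx ↦ by
    obtain ⟨K', hK'⟩ := hf K
    have hK'n : K' ∈ {K : LieIdeal F L' | LieModule.IsNilpotent K K} :=
      isNilpotent_of_image_eq f hK' hK
    exact le_sSup hK'n (by rw [← LieSubmodule.mem_coe, ← hK']; exact Set.mem_image_of_mem f hx)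

lemma nilrad_le_Ndagger : (nilrad F L).toLieSubalgebra ≤ Ndagger F L := le_sup_left

lemma Edagger_le_Ndagger : Edagger F L ≤ Ndagger F L := le_sup_right

lemma isMinModIdeal_iff_covBy {Z A : LieIdeal F L} : IsMinModIdeal Z A ↔ Z ⋖ A :=
  covBy_iff_lt_and_eq_or_eq.symm

lemma idealCenter_lie_self (A : LieIdeal F L) : ⁅idealCenter A, A⁆ = ⊥ :=
  (LieSubmodule.lie_eq_bot_iff _ _).mpr fun _ hx y hy ↦ hx.2 y hy

lemma le_of_idealCenter_sup_inf_eq {A I : LieIdeal F L} (hA : ⁅A, A⁆ = A)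
    (hAI : idealCenter A ⊔ A ⊓ I = A) : A ≤ I :=
  calc A = ⁅idealCenter A ⊔ A ⊓ I, A⁆ := by rw [hAI, hA]
    _ = ⁅A ⊓ I, A⁆ := by rw [LieSubmodule.sup_lie, idealCenter_lie_self, bot_sup_eq]
    _ ≤ I := (LieSubmodule.lie_le_left _ _).trans inf_le_right

lemma IsQuasiMinimal.le_or_le {A I J : LieIdeal F L} (hA : IsQuasiMinimal A)
    (h : Codisjoint I J) : A ≤ I ∨ A ≤ J := by
  obtain ⟨hAA, hlt, hmin⟩ := hA
  have hZA : idealCenter A ≤ A := fun _ hx ↦ hx.1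
  rcases hmin _ le_sup_left (sup_le hZA inf_le_left) with hI | hI
  swap; · exact .inl (le_of_idealCenter_sup_inf_eq hAA hI)
  rcases hmin _ le_sup_left (sup_le hZA inf_le_left) with hJ | hJ
  swap; · exact .inr (le_of_idealCenter_sup_inf_eq hAA hJ)
  refine absurd ?_ hlt.not_ge
  calc A = ⁅A, A⁆ := hAA.symm
    _ ≤ ⁅A, I ⊔ J⁆ := LieSubmodule.mono_lie_right A (h.eq_top ▸ le_top)
    _ = ⁅A, I⁆ ⊔ ⁅A, J⁆ := LieSubmodule.lie_sup _ _ _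
    _ ≤ A ⊓ I ⊔ A ⊓ J := sup_le_sup (LieSubmodule.lie_le_inf _ _) (LieSubmodule.lie_le_inf _ _)
    _ ≤ idealCenter A := sup_le (le_sup_right.trans hI.le) (le_sup_right.trans hJ.le)

end

section DirectSum

variable {F : Type*} [Field F] {L : Type*} [LieRing L] [LieAlgebra F L] {I J : LieIdeal F L}
  (h : IsCompl I J)
include h

lemma nilrad_le_comap_incl : nilrad F I ≤ LieIdeal.comap I.incl (nilrad F L) :=
  nilrad_le_comap_nilrad I.incl fun K ↦ ⟨liftIdeal h K, (coe_liftIdeal h K).symm⟩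

lemma nilrad_le_comap_projection : nilrad F L ≤ LieIdeal.comap (projection h) (nilrad F I) :=
  nilrad_le_comap_nilrad _ fun K ↦ ⟨K.map (projection h),
    (congrArg SetLike.coe (LieIdeal.coe_map_of_surjective (projection_surjective h))).symm⟩

lemma idealCenter_liftIdeal (K : LieIdeal F I) :
    idealCenter (liftIdeal h K) = liftIdeal h (idealCenter K) := by
  ext x
  constructor
  · rintro ⟨⟨a, ha, rfl⟩, hcen⟩
    exact ⟨a, ⟨ha, fun b hb ↦ Subtype.ext (hcen b ((coe_mem_liftIdeal h).mpr hb))⟩, rfl⟩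
  · rintro ⟨a, ⟨ha, hcen⟩, rfl⟩
    refine ⟨(coe_mem_liftIdeal h).mpr ha, ?_⟩
    rintro _ ⟨b, hb, rfl⟩
    exact congrArg Subtype.val (hcen b hb)

lemma isQuasiMinimal_liftIdeal_iff (K : LieIdeal F I) :
    IsQuasiMinimal (liftIdeal h K) ↔ IsQuasiMinimal K := by
  simp only [IsQuasiMinimal, isMinModIdeal_iff_covBy, ← liftIdeal_lie, idealCenter_liftIdeal,
    (liftIdeal h).eq_iff_eq, liftIdeal_covBy_liftIdeal_iff]

lemma coe_mem_Ndagger {a : I} (ha : a ∈ Ndagger F I) : (a : L) ∈ Ndagger F L := by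
  suffices Ndagger F I ≤ (Ndagger F L).comap I.incl from this ha
  refine sup_le (fun b hb ↦ nilrad_le_Ndagger (nilrad_le_comap_incl h hb))
    (LieSubalgebra.lieSpan_le.mpr fun b hb ↦ ?_)
  obtain ⟨K, hK, hbK⟩ := Set.mem_iUnion₂.mp hb
  exact Edagger_le_Ndagger (LieSubalgebra.subset_lieSpan (Set.mem_biUnion
    ((isQuasiMinimal_liftIdeal_iff h K).mpr hK) ((coe_mem_liftIdeal h).mpr hbK)))

lemma mem_Edagger_of_le {A : LieIdeal F L} (hA : IsQuasiMinimal A) (hAI : A ≤ I) {x : L}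
    (hx : x ∈ A) : (⟨x, hAI hx⟩ : I) ∈ Edagger F I := by
  rw [← liftIdeal_comap_incl h hAI, isQuasiMinimal_liftIdeal_iff] at hA
  exact LieSubalgebra.subset_lieSpan (Set.mem_biUnion hA hx)

lemma Ndagger_le_sumSubalgebra :
    Ndagger F L ≤ sumSubalgebra h.disjoint (Ndagger F I) (Ndagger F J) := by
  refine sup_le (fun x hx ↦ ?_) (LieSubalgebra.lieSpan_le.mpr fun x hx ↦ ?_)
  · exact ⟨_, nilrad_le_Ndagger (nilrad_le_comap_projection h hx),
      _, nilrad_le_Ndagger (nilrad_le_comap_projection h.symm hx),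
      (projection_add_projection h x).symm⟩
  obtain ⟨A, hA, hxA⟩ := Set.mem_iUnion₂.mp hx
  rcases hA.le_or_le h.codisjoint with hAI | hAJ
  · exact ⟨⟨x, hAI hxA⟩, Edagger_le_Ndagger (mem_Edagger_of_le h hA hAI hxA), 0, zero_mem _,
      by simp⟩
  · exact ⟨0, zero_mem _, ⟨x, hAJ hxA⟩, Edagger_le_Ndagger (mem_Edagger_of_le h.symm hA hAJ hxA),
      by simp⟩

lemma sumSubalgebra_le_Ndagger :
    sumSubalgebra h.disjoint (Ndagger F I) (Ndagger F J) ≤ Ndagger F L := by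
  rintro _ ⟨y, hy, z, hz, rfl⟩
  exact add_mem (coe_mem_Ndagger h hy) (coe_mem_Ndagger h.symm hz)

end DirectSum

theorem stmt_15_general (F : Type*) [Field F] (L : Type*) [LieRing L] [LieAlgebra F L]
    (I J : LieIdeal F L)
    (hsup : I ⊔ J = ⊤) (hinf : I ⊓ J = ⊥) :
    (Ndagger F L : Set L) =
      {x : L | ∃ y ∈ Ndagger F I, ∃ z ∈ Ndagger F J, x = (y : L) + (z : L)} := by
  have h : IsCompl I J := IsCompl.of_eq hinf hsup
  exact congrArg SetLike.coe
    (le_antisymm (Ndagger_le_sumSubalgebra h) (sumSubalgebra_le_Ndagger h))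

/-- If `L = I ⊕ J` is a direct sum of ideals then `N†(L) = N†(I) ⊕ N†(J)`. -/
theorem stmt_15 (F : Type*) [Field F] (L : Type*) [LieRing L] [LieAlgebra F L]
    [FiniteDimensional F L] (I J : LieIdeal F L)
    (hsup : I ⊔ J = ⊤) (hinf : I ⊓ J = ⊥) :
    (Ndagger F L : Set L) =
      {x : L | ∃ y ∈ Ndagger F I, ∃ z ∈ Ndagger F J, x = (y : L) + (z : L)} :=
  stmt_15_general F L I J hsup hinf

end Paper
end
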